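/- Let ε ≥ 0, ζ > 0, and let ỹ_k(σ), ỹ_k(ρ) be positive reals with e^{−ε} ≤ ỹ_k(ρ)/ỹ_k(σ) ≤ e^{ε} for all k, and let ŷ_k be estimates with |ŷ_k − ỹ_k(σ)| ≤ ζ for all k. If ŷ_C − ζ > e^{2ε}·max_{k≠C}(ŷ_k + ζ), then ỹ_C(ρ) > ỹ_k(ρ) for all k ≠ C. -/

import Mathlib

open Real

/-- Going from `σ` to `ρ` costs at most a factor `exp ε` per class, so a margin of
`exp (2 * ε)` between a lower bound for class `C` and an upper bound for class `k` at `σ`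
survives the passage to `ρ`. -/
theorem lt_of_exp_two_mul_margin {ε xC xk sC sk lC uk : ℝ}
    (hC : exp (-ε) * sC ≤ xC) (hk : xk ≤ exp ε * sk)
    (hlC : lC ≤ sC) (huk : sk ≤ uk) (hmargin : exp (2 * ε) * uk < lC) :
    xk < xC := by
  have hexp : exp ε = exp (-ε) * exp (2 * ε) := by rw [← exp_add]; ring_nf
  calc xk ≤ exp ε * sk := hk
    _ ≤ exp ε * uk := by gcongr
    _ = exp (-ε) * (exp (2 * ε) * uk) := by rw [hexp, mul_assoc]
    _ < exp (-ε) * lC := by gcongr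
    _ ≤ exp (-ε) * sC := by gcongr
    _ ≤ xC := hC

theorem stmt11_general (ε ζ : ℝ) (K : ℕ)
    (yσ yρ yhat : Fin K → ℝ) (hσ : ∀ k, 0 < yσ k)
    (hdp : ∀ k, Real.exp (-ε) ≤ yρ k / yσ k ∧ yρ k / yσ k ≤ Real.exp ε)
    (hest : ∀ k, |yhat k - yσ k| ≤ ζ) (C : Fin K)
    (hmargin : ∀ k, k ≠ C → yhat C - ζ > Real.exp (2 * ε) * (yhat k + ζ)) :
    ∀ k, k ≠ C → yρ C > yρ k := by
  intro k hk
  have hρC : exp (-ε) * yσ C ≤ yρ C := (le_div_iff₀ (hσ C)).1 (hdp C).1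
  have hρk : yρ k ≤ exp ε * yσ k := (div_le_iff₀ (hσ k)).1 (hdp k).2
  have hσC : yhat C - ζ ≤ yσ C := by linarith [(abs_sub_le_iff.1 (hest C)).1]
  have hσk : yσ k ≤ yhat k + ζ := by linarith [(abs_sub_le_iff.1 (hest k)).2]
  exact lt_of_exp_two_mul_margin hρC hρk hσC hσk (hmargin k hk)

theorem stmt11 (ε ζ : ℝ) (hε : 0 ≤ ε) (hζ : 0 < ζ) (K : ℕ) (hK : 2 ≤ K)
    (yσ yρ yhat : Fin K → ℝ) (hσ : ∀ k, 0 < yσ k) (hρ : ∀ k, 0 < yρ k)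
    (hdp : ∀ k, Real.exp (-ε) ≤ yρ k / yσ k ∧ yρ k / yσ k ≤ Real.exp ε)
    (hest : ∀ k, |yhat k - yσ k| ≤ ζ) (C : Fin K)
    (hmargin : ∀ k, k ≠ C → yhat C - ζ > Real.exp (2 * ε) * (yhat k + ζ)) :
    ∀ k, k ≠ C → yρ C > yρ k :=
  stmt11_general ε ζ K yσ yρ yhat hσ hdp hest C hmargin
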